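/- arXiv:1310.2673 — 2 statements merged into one kernel-verified Lean document; each statement's English description precedes it below -/
import Mathlib

section
/- Let c > 0 and let Σ = Ω × ℝ where Ω ⊂ ℝ^{n-1} is a bounded domain. If S ⊂ Σ is measurable with ∫_S e^{cz} dx < ∞, then the exponentially weighted perimeter satisfies Per_c(S, Σ) ≥ c ∫_S e^{cz} dx, where Per_c(S, Σ) = sup { ∫_S e^{cz}(div φ + c ẑ·φ) dx : φ ∈ C¹_c(Σ; ℝⁿ), |φ| ≤ 1 }. -/
/-!
Test the supremum against vertical fields `φ = (0, ρ(y) χ(z))`, whose weighted divergence is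
`e^{cz} (ρ χ' + c ρ χ)`. Let `ρ` run through smooth cutoffs exhausting `Ω` and `χ` through the
rescalings `z ↦ b (z / (n + 1))` of one fixed bump `b`, so that `|χ'|` stays uniformly bounded.
Dominated convergence, with dominant `(sup |b'| + |c|) e^{cz}`, then sends these integrals
to `c ∫_S e^{cz}`.
-/

open MeasureTheory Set Real
open scoped ENNReal
open Filter Topology
open scoped ContDiff Manifold

/-- The exponentially weighted perimeter `Per_c(S, Σ)` of a set `S` relative to a
cylinder-like set `Sig`, defined as the supremum of
`∫_S e^{cz} (div φ + c ẑ·φ) dx` over `C¹` vector fields `φ` with compact support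
contained in `Sig` and `|φ| ≤ 1`. -/
noncomputable def perC {m : ℕ} (c : ℝ)
    (Sig S : Set (EuclideanSpace ℝ (Fin m) × ℝ)) : ℝ≥0∞ :=
  ⨆ φ : {φ : EuclideanSpace ℝ (Fin m) × ℝ → EuclideanSpace ℝ (Fin m) × ℝ //
      ContDiff ℝ 1 φ ∧ HasCompactSupport φ ∧ tsupport φ ⊆ Sig ∧ ∀ x, ‖φ x‖ ≤ 1},
    ENNReal.ofReal (∫ x in S, Real.exp (c * x.2) *
      (((∑ i : Fin m, (fderiv ℝ φ.1 x ((EuclideanSpace.single i (1:ℝ)), (0:ℝ))).1 i)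
          + (fderiv ℝ φ.1 x (0, (1:ℝ))).2)
        + c * (φ.1 x).2))

section Cutoff

variable {E : Type*} [NormedAddCommGroup E] [NormedSpace ℝ E] [FiniteDimensional ℝ E]

theorem exists_contDiff_hasCompactSupport_eqOn_one {K U : Set E} (hK : IsCompact K)
    (hU : IsOpen U) (hKU : K ⊆ U) :
    ∃ ρ : E → ℝ, (ContDiff ℝ ∞ ρ ∧ HasCompactSupport ρ ∧ tsupport ρ ⊆ U ∧
      ∀ x, ρ x ∈ Icc 0 1) ∧ EqOn ρ 1 K := by
  obtain ⟨L, hL, hKL, hLU⟩ := exists_compact_between hK hU hKU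
  obtain ⟨ρ, hρK, hρL, hρ01⟩ :=
    exists_contMDiffMap_one_nhds_of_subset_interior 𝓘(ℝ, E) hK.isClosed hKL (n := ⊤)
  have hsupp : Function.support ρ ⊆ L := fun x hx => by_contra fun hxL => hx (hρL x hxL)
  refine ⟨ρ, ⟨ρ.contMDiff.contDiff, .of_support_subset_isCompact hL hsupp,
    (closure_minimal hsupp hL.isClosed).trans hLU, hρ01⟩, fun x hx => ?_⟩
  exact hρK.self_of_nhdsSet x hx

theorem IsOpen.exists_contDiff_seq_eventually_eq_one {U : Set E} (hU : IsOpen U) :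
    ∃ ρ : ℕ → E → ℝ, (∀ n, ContDiff ℝ ∞ (ρ n) ∧ HasCompactSupport (ρ n) ∧
      tsupport (ρ n) ⊆ U ∧ ∀ x, ρ n x ∈ Icc 0 1) ∧ ∀ x ∈ U, ∀ᶠ n in atTop, ρ n x = 1 := by
  have := hU.locallyCompactSpace
  let K := CompactExhaustion.choice U
  choose ρ hρ hρK using fun n => exists_contDiff_hasCompactSupport_eqOn_one
    ((K.isCompact n).image continuous_subtype_val) hU (Subtype.coe_image_subset U (K n))
  refine ⟨ρ, hρ, fun x hx => ?_⟩
  obtain ⟨N, hN⟩ := K.exists_mem ⟨x, hx⟩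
  filter_upwards [eventually_ge_atTop N] with n hn
  exact hρK n ⟨_, K.subset hn hN, rfl⟩

end Cutoff

noncomputable def unitBump : ContDiffBump (0 : ℝ) where
  rIn := 1
  rOut := 2
  rIn_pos := one_pos
  rIn_lt_rOut := one_lt_two

noncomputable def heightCutoff (n : ℕ) : ℝ → ℝ := fun z => unitBump ((n + 1 : ℝ)⁻¹ * z)

theorem contDiff_heightCutoff (n : ℕ) : ContDiff ℝ ∞ (heightCutoff n) :=
  unitBump.contDiff.comp (contDiff_const.mul contDiff_id)

theorem hasCompactSupport_heightCutoff (n : ℕ) : HasCompactSupport (heightCutoff n) := by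
  have hn : (n + 1 : ℝ)⁻¹ ≠ 0 := by positivity
  have h := unitBump.hasCompactSupport.comp_smul hn
  simp only [smul_eq_mul] at h
  exact h

theorem abs_heightCutoff_le_one (n : ℕ) (z : ℝ) : |heightCutoff n z| ≤ 1 :=
  (abs_of_nonneg unitBump.nonneg).trans_le unitBump.le_one

theorem exists_abs_deriv_heightCutoff_le : ∃ M, ∀ n z, |deriv (heightCutoff n) z| ≤ M := by
  obtain ⟨M, hM⟩ := (unitBump.contDiff (n := 1)).continuous_deriv le_rfl
    |>.bounded_above_of_compact_support unitBump.hasCompactSupport.deriv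
  refine ⟨M, fun n z => ?_⟩
  have hn : (n + 1 : ℝ)⁻¹ ≤ 1 := inv_le_one_of_one_le₀ (by simp)
  change |deriv (fun z => unitBump ((n + 1 : ℝ)⁻¹ * z)) z| ≤ M
  rw [deriv_comp_mul_left, smul_eq_mul, abs_mul, abs_of_pos (by positivity)]
  exact (mul_le_of_le_one_left (abs_nonneg _) hn).trans (hM _)

theorem eventually_heightCutoff_eventuallyEq_one (z : ℝ) :
    ∀ᶠ n : ℕ in atTop, heightCutoff n =ᶠ[𝓝 z] 1 := by
  filter_upwards [tendsto_natCast_atTop_atTop.eventually_gt_atTop |z|] with n hn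
  have hball : (n + 1 : ℝ)⁻¹ * z ∈ Metric.ball 0 unitBump.rIn := by
    rw [mem_ball_zero_iff, norm_mul, norm_inv, Real.norm_eq_abs, Real.norm_eq_abs,
      abs_of_pos (by positivity), inv_mul_lt_iff₀ (by positivity)]
    change |z| < (n + 1) * 1
    linarith
  exact ((continuous_const.mul continuous_id).tendsto z).eventually
    (unitBump.eventuallyEq_one_of_mem_ball hball)

theorem fderiv_mul_fst_snd_apply {E : Type*} [NormedAddCommGroup E] [NormedSpace ℝ E]
    {ρ : E → ℝ} {χ : ℝ → ℝ} {x : E × ℝ} (hρ : DifferentiableAt ℝ ρ x.1)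
    (hχ : DifferentiableAt ℝ χ x.2) :
    fderiv ℝ (fun p : E × ℝ => ρ p.1 * χ p.2) x (0, 1) = ρ x.1 * deriv χ x.2 := by
  have h : HasFDerivAt (fun p : E × ℝ => ρ p.1 * χ p.2) _ x :=
    (hρ.hasFDerivAt.comp x hasFDerivAt_fst).mul (hχ.hasFDerivAt.comp x hasFDerivAt_snd)
  rw [h.fderiv]
  simp

theorem ofReal_setIntegral_le_perC {m : ℕ} (c : ℝ) {Ω : Set (EuclideanSpace ℝ (Fin m))}
    (S : Set (EuclideanSpace ℝ (Fin m) × ℝ)) {ρ : EuclideanSpace ℝ (Fin m) → ℝ} {χ : ℝ → ℝ}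
    (hρ : ContDiff ℝ 1 ρ) (hρc : HasCompactSupport ρ) (hρΩ : tsupport ρ ⊆ Ω)
    (hρ1 : ∀ y, |ρ y| ≤ 1) (hχ : ContDiff ℝ 1 χ) (hχc : HasCompactSupport χ)
    (hχ1 : ∀ z, |χ z| ≤ 1) :
    ENNReal.ofReal (∫ x in S, exp (c * x.2) * (ρ x.1 * deriv χ x.2 + c * (ρ x.1 * χ x.2)))
      ≤ perC c (Ω ×ˢ univ) S := by
  set g := fun p : EuclideanSpace ℝ (Fin m) × ℝ => ρ p.1 * χ p.2
  have hg : ContDiff ℝ 1 g := (hρ.comp contDiff_fst).mul (hχ.comp contDiff_snd)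
  have hsupp : Function.support (fun p => ((0 : EuclideanSpace ℝ (Fin m)), g p))
      ⊆ tsupport ρ ×ˢ tsupport χ := by
    intro p hp
    have hgp : ρ p.1 * χ p.2 ≠ 0 := fun h => hp (by simp [g, h])
    exact ⟨subset_tsupport _ (left_ne_zero_of_mul hgp),
      subset_tsupport _ (right_ne_zero_of_mul hgp)⟩
  refine le_iSup_of_le ⟨fun p => (0, g p), contDiff_const.prodMk hg,
    .of_support_subset_isCompact (hρc.prod hχc) hsupp,
    (closure_minimal hsupp ((isClosed_tsupport ρ).prod (isClosed_tsupport χ))).trans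
      (prod_mono hρΩ (subset_univ _)),
    fun p => ?_⟩ (le_of_eq ?_)
  · simpa [g, abs_mul] using mul_le_one₀ (hρ1 p.1) (abs_nonneg _) (hχ1 p.2)
  · congr 1
    refine integral_congr_ae (.of_forall fun x => ?_)
    simp [(differentiableAt_const _).fderiv_prodMk (hg.differentiable one_ne_zero x), g,
      fderiv_mul_fst_snd_apply (hρ.differentiable one_ne_zero _)
      (hχ.differentiable one_ne_zero _)]

theorem tendsto_setIntegral_heightCutoff {Y : Type*} [MeasurableSpace Y] {μ : Measure (Y × ℝ)}
    (c : ℝ) {Ω : Set Y} (hΩ : MeasurableSet Ω) {S : Set (Y × ℝ)} (hSΩ : S ⊆ Ω ×ˢ univ)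
    (hint : IntegrableOn (fun x => exp (c * x.2)) S μ) {ρ : ℕ → Y → ℝ}
    (hρ : ∀ n, Measurable (ρ n)) (hρ1 : ∀ n y, |ρ n y| ≤ 1)
    (hρΩ : ∀ y ∈ Ω, ∀ᶠ n in atTop, ρ n y = 1) :
    Tendsto (fun n => ∫ x in S, exp (c * x.2) *
        (ρ n x.1 * deriv (heightCutoff n) x.2 + c * (ρ n x.1 * heightCutoff n x.2)) ∂μ)
      atTop (𝓝 (c * ∫ x in S, exp (c * x.2) ∂μ)) := by
  obtain ⟨M, hM⟩ := exists_abs_deriv_heightCutoff_le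
  rw [← integral_const_mul]
  refine tendsto_integral_of_dominated_convergence (fun x => exp (c * x.2) * (M + |c|))
    (fun n => ?_) (hint.mul_const _) (fun n => .of_forall fun x => ?_) ?_
  · have := (contDiff_heightCutoff n).continuous.measurable
    exact Measurable.aestronglyMeasurable (by fun_prop)
  · rw [norm_mul, norm_of_nonneg (exp_pos _).le, Real.norm_eq_abs]
    gcongr
    calc |ρ n x.1 * deriv (heightCutoff n) x.2 + c * (ρ n x.1 * heightCutoff n x.2)|
        ≤ |ρ n x.1| * |deriv (heightCutoff n) x.2|
          + |c| * (|ρ n x.1| * |heightCutoff n x.2|) := by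
          rw [← abs_mul, ← abs_mul, ← abs_mul]
          exact abs_add_le _ _
      _ ≤ 1 * M + |c| * (1 * 1) := by
          gcongr
          exacts [hρ1 n x.1, hM n x.2, hρ1 n x.1, abs_heightCutoff_le_one n x.2]
      _ = M + |c| := by ring
  · refine ae_mono (Measure.restrict_mono hSΩ le_rfl)
      (ae_restrict_of_forall_mem (hΩ.prod .univ) fun x hx => tendsto_const_nhds.congr' ?_)
    filter_upwards [hρΩ x.1 hx.1, eventually_heightCutoff_eventuallyEq_one x.2] with n hρn hχn
    rw [hρn, hχn.eq_of_nhds, hχn.deriv_eq]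
    simp [mul_comm]

theorem weighted_perimeter_lower_bound_general {m : ℕ} (c : ℝ)
    (Ω : Set (EuclideanSpace ℝ (Fin m))) (hΩo : IsOpen Ω)
    (S : Set (EuclideanSpace ℝ (Fin m) × ℝ))
    (hSsub : S ⊆ Ω ×ˢ (univ : Set ℝ))
    (hint : IntegrableOn (fun x => Real.exp (c * x.2)) S) :
    ENNReal.ofReal (c * ∫ x in S, Real.exp (c * x.2))
      ≤ perC c (Ω ×ˢ (univ : Set ℝ)) S := by
  obtain ⟨ρ, hρ, hρΩ⟩ := hΩo.exists_contDiff_seq_eventually_eq_one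
  have hρ1 : ∀ n y, |ρ n y| ≤ 1 := fun n y =>
    (abs_of_nonneg ((hρ n).2.2.2 y).1).trans_le ((hρ n).2.2.2 y).2
  have hlim := tendsto_setIntegral_heightCutoff c hΩo.measurableSet hSsub hint
    (fun n => (hρ n).1.continuous.measurable) hρ1 hρΩ
  refine le_of_tendsto ((ENNReal.continuous_ofReal.tendsto _).comp hlim) (.of_forall fun n => ?_)
  exact ofReal_setIntegral_le_perC c S ((hρ n).1.of_le (by simp)) (hρ n).2.1 (hρ n).2.2.1 (hρ1 n)
    ((contDiff_heightCutoff n).of_le (by simp)) (hasCompactSupport_heightCutoff n)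
    (abs_heightCutoff_le_one n)

/-- If `c > 0`, `Ω ⊂ ℝ^{n-1}` is a bounded domain, `Σ = Ω × ℝ`, and
`S ⊆ Σ` is measurable with `∫_S e^{cz} dx < ∞`, then
`Per_c(S, Σ) ≥ c ∫_S e^{cz} dx`. -/
theorem weighted_perimeter_lower_bound {m : ℕ} (c : ℝ) (hc : 0 < c)
    (Ω : Set (EuclideanSpace ℝ (Fin m))) (hΩo : IsOpen Ω) (hΩne : Ω.Nonempty)
    (hΩb : Bornology.IsBounded Ω)
    (S : Set (EuclideanSpace ℝ (Fin m) × ℝ)) (hS : MeasurableSet S)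
    (hSsub : S ⊆ Ω ×ˢ (univ : Set ℝ))
    (hint : IntegrableOn (fun x => Real.exp (c * x.2)) S) :
    ENNReal.ofReal (c * ∫ x in S, Real.exp (c * x.2))
      ≤ perC c (Ω ×ˢ (univ : Set ℝ)) S :=
  weighted_perimeter_lower_bound_general c Ω hΩo S hSsub hint
end

section
/- Let c > 0 and let S ⊂ Σ = Ω × ℝ satisfy 0 < ∫_S e^{cz} dx < ∞. Define ψ : Ω → [−∞, ∞) by ψ(y) := (1/c) ln( c ∫_{S^y} e^{cz} dz ), where S^y = { z : (y,z) ∈ S }, and let S_ψ := { (y,z) : z < ψ(y) }. Then ∫_{S_ψ} e^{cz} dx = ∫_S e^{cz} dx, and for every bounded measurable g : Ω → ℝ, ∫_{S_ψ} e^{cz} g(y) dx = ∫_S e^{cz} g(y) dx. -/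
/-!
By Fubini, `∫_S e^{cz} g(y)` depends on `S` only through its fibre weights
`I(y) = ∫_{S^y} e^{cz} dz`: it equals `∫ I(y) g(y) dy`. The fibre of `S_ψ` over `y` is the
half-line `z < ψ(y)`, of weight `e^{cψ(y)} / c = I(y)` (it is empty when `I(y) = 0`), so `S` and
`S_ψ` have the same fibre weights. Integrability of `e^{cz}` on `S_ψ` comes the same way, from
that of `I`.
-/

open MeasureTheory Set Real

/-- The weighted length of the fiber `S^y = { z : (y,z) ∈ S }`:
`I(y) = ∫_{S^y} e^{cz} dz = (1/c) e^{cψ(y)}`, where `ψ` is the rearrangement profile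
`ψ(y) = (1/c) ln(c I(y))` (with `ln 0 = −∞`). -/
noncomputable def fiberWeight {m : ℕ} (c : ℝ)
    (S : Set (EuclideanSpace ℝ (Fin m) × ℝ)) (y : EuclideanSpace ℝ (Fin m)) : ℝ :=
  ∫ z in {z : ℝ | (y, z) ∈ S}, Real.exp (c * z)

/-- The exponential rearrangement `S_ψ = {(y,z) : z < ψ(y)}` of `S`, written via the
equivalent condition `e^{cz} < c I(y)`, which correctly encodes the convention
`ψ(y) = −∞` on empty fibers. -/
def rearr {m : ℕ} (c : ℝ) (Ω : Set (EuclideanSpace ℝ (Fin m)))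
    (S : Set (EuclideanSpace ℝ (Fin m) × ℝ)) : Set (EuclideanSpace ℝ (Fin m) × ℝ) :=
  {p | p.1 ∈ Ω ∧ Real.exp (c * p.2) < c * fiberWeight c S p.1}

section Fiber

variable {α β : Type*}

lemma indicator_prodMk_apply (T : Set (α × β)) (g : α × β → ℝ) (x : α) :
    (fun y => T.indicator g (x, y)) = (Prod.mk x ⁻¹' T).indicator fun y => g (x, y) :=
  funext fun _ => (indicator_comp_right _).symm

variable [MeasurableSpace α] [MeasurableSpace β] {μ : Measure α} {ν : Measure β}
  {T T' : Set (α × β)} {f : β → ℝ}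

lemma integral_indicator_prodMk (hT : MeasurableSet T) (g : α × β → ℝ) (x : α) :
    ∫ y, T.indicator g (x, y) ∂ν = ∫ y in Prod.mk x ⁻¹' T, g (x, y) ∂ν := by
  rw [indicator_prodMk_apply, integral_indicator (measurable_prodMk_left hT)]

variable [SFinite ν]

theorem measurable_setIntegral_prodMk_preimage (hT : MeasurableSet T) (hf : Measurable f) :
    Measurable fun x => ∫ y in Prod.mk x ⁻¹' T, f y ∂ν := by
  have h := ((hf.comp measurable_snd).indicator hT).stronglyMeasurable.integral_prod_right'
    (ν := ν)
  simp only [integral_indicator_prodMk hT] at h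
  exact h.measurable

theorem integrableOn_comp_snd_iff (hT : MeasurableSet T) (hf : Measurable f) (hf0 : 0 ≤ f) :
    IntegrableOn (fun p => f p.2) T (μ.prod ν) ↔
      (∀ᵐ x ∂μ, IntegrableOn f (Prod.mk x ⁻¹' T) ν) ∧
        Integrable (fun x => ∫ y in Prod.mk x ⁻¹' T, f y ∂ν) μ := by
  have hfT : Measurable (T.indicator fun p : α × β => f p.2) :=
    (hf.comp measurable_snd).indicator hT
  rw [← integrable_indicator_iff hT, integrable_prod_iff hfT.aestronglyMeasurable]
  simp only [norm_indicator_eq_indicator_norm, Real.norm_of_nonneg (hf0 _), indicator_prodMk_apply,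
    integrable_indicator_iff (measurable_prodMk_left hT),
    integral_indicator (measurable_prodMk_left hT)]

theorem setIntegral_prod_mul_comp_fst [SFinite μ] (hT : MeasurableSet T) {g : α → ℝ}
    (hfg : IntegrableOn (fun p => f p.2 * g p.1) T (μ.prod ν)) :
    ∫ p in T, f p.2 * g p.1 ∂(μ.prod ν) =
      ∫ x, (∫ y in Prod.mk x ⁻¹' T, f y ∂ν) * g x ∂μ := by
  rw [← integral_indicator hT, integral_prod _ ((integrable_indicator_iff hT).2 hfg)]
  simp only [integral_indicator_prodMk hT, integral_mul_const]

theorem setIntegral_prod_mul_eq_of_fiber_integral_eq [SFinite μ] (hT : MeasurableSet T)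
    (hT' : MeasurableSet T') (hf : Measurable f) (hf0 : 0 ≤ f)
    (hint : IntegrableOn (fun p => f p.2) T (μ.prod ν))
    (hint_fib' : ∀ᵐ x ∂μ, IntegrableOn f (Prod.mk x ⁻¹' T') ν)
    (hfib : (fun x => ∫ y in Prod.mk x ⁻¹' T', f y ∂ν)
      =ᵐ[μ] fun x => ∫ y in Prod.mk x ⁻¹' T, f y ∂ν)
    {g : α → ℝ} (hg : Measurable g) {K : ℝ} (hK : ∀ x, |g x| ≤ K) :
    ∫ p in T', f p.2 * g p.1 ∂(μ.prod ν) = ∫ p in T, f p.2 * g p.1 ∂(μ.prod ν) := by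
  have hint' : IntegrableOn (fun p => f p.2) T' (μ.prod ν) :=
    (integrableOn_comp_snd_iff hT' hf hf0).2
      ⟨hint_fib', ((integrableOn_comp_snd_iff hT hf hf0).1 hint).2.congr hfib.symm⟩
  have mul_g {U : Set (α × β)} (hU : IntegrableOn (fun p : α × β => f p.2) U (μ.prod ν)) :
      IntegrableOn (fun p : α × β => f p.2 * g p.1) U (μ.prod ν) :=
    hU.mul_bdd (g := fun p : α × β => g p.1)
      (hg.comp measurable_fst).aestronglyMeasurable
      (ae_of_all _ fun p => (Real.norm_eq_abs _).trans_le (hK p.1))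
  rw [setIntegral_prod_mul_comp_fst hT' (mul_g hint'),
    setIntegral_prod_mul_comp_fst hT (mul_g hint)]
  exact integral_congr_ae (hfib.mul (ae_of_all _ fun _ => rfl))

end Fiber

section ExpSublevel

variable {c : ℝ}

lemma setOf_exp_mul_lt_eq_Iio (hc : 0 < c) {t : ℝ} (ht : 0 < t) :
    {z : ℝ | exp (c * z) < t} = Iio (log t / c) := by
  ext z
  rw [mem_ofPred_eq, mem_Iio, lt_div_iff₀ hc, mul_comm, lt_log_iff_exp_lt ht]

lemma setOf_exp_mul_lt_eq_empty {t : ℝ} (ht : t ≤ 0) : {z : ℝ | exp (c * z) < t} = ∅ :=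
  eq_empty_of_forall_notMem fun _ hz => (exp_pos _).not_ge (ht.trans' hz.le)

theorem integrableOn_exp_mul_setOf_exp_mul_lt (hc : 0 < c) (t : ℝ) :
    IntegrableOn (fun z => exp (c * z)) {z | exp (c * z) < t} := by
  rcases lt_or_ge 0 t with ht | ht
  · rw [setOf_exp_mul_lt_eq_Iio hc ht]
    exact (integrableOn_exp_mul_Iic hc _).mono_set Iio_subset_Iic_self
  · rw [setOf_exp_mul_lt_eq_empty ht]
    exact integrableOn_empty

theorem integral_exp_mul_setOf_exp_mul_lt (hc : 0 < c) {a : ℝ} (ha : 0 ≤ a) :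
    ∫ z in {z | exp (c * z) < c * a}, exp (c * z) = a := by
  rcases ha.eq_or_lt with rfl | ha
  · rw [mul_zero, setOf_exp_mul_lt_eq_empty le_rfl, Measure.restrict_empty,
      integral_zero_measure]
  have hca : 0 < c * a := mul_pos hc ha
  rw [setOf_exp_mul_lt_eq_Iio hc hca, setIntegral_congr_set Iio_ae_eq_Iic,
    integral_exp_mul_Iic hc, mul_div_cancel₀ _ hc.ne', exp_log hca,
    mul_div_cancel_left₀ _ hc.ne']

end ExpSublevel

section Rearrangement

variable {m : ℕ} {c : ℝ} {Ω : Set (EuclideanSpace ℝ (Fin m))}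
  {S : Set (EuclideanSpace ℝ (Fin m) × ℝ)}

lemma fiberWeight_nonneg (c : ℝ) (S : Set (EuclideanSpace ℝ (Fin m) × ℝ))
    (y : EuclideanSpace ℝ (Fin m)) : 0 ≤ fiberWeight c S y :=
  setIntegral_nonneg_of_ae (ae_of_all _ fun _ => (exp_pos _).le)

lemma measurable_fiberWeight (hS : MeasurableSet S) : Measurable (fiberWeight c S) :=
  measurable_setIntegral_prodMk_preimage hS (by fun_prop)

lemma fiberWeight_eq_zero_of_notMem (hSsub : S ⊆ Ω ×ˢ univ) {y : EuclideanSpace ℝ (Fin m)}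
    (hy : y ∉ Ω) : fiberWeight c S y = 0 := by
  have hempty : {z : ℝ | (y, z) ∈ S} = ∅ :=
    eq_empty_of_forall_notMem fun _ hz => hy (hSsub hz).1
  rw [fiberWeight, hempty, Measure.restrict_empty, integral_zero_measure]

lemma rearr_eq_of_subset (hSsub : S ⊆ Ω ×ˢ univ) :
    rearr c Ω S = {p | exp (c * p.2) < c * fiberWeight c S p.1} := by
  refine Subset.antisymm (fun p hp => hp.2) fun p hp => ⟨?_, hp⟩
  by_contra hp1
  rw [mem_ofPred_eq, fiberWeight_eq_zero_of_notMem hSsub hp1, mul_zero] at hp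
  exact (exp_pos _).not_gt hp

lemma measurableSet_rearr (hS : MeasurableSet S) (hSsub : S ⊆ Ω ×ˢ univ) :
    MeasurableSet (rearr c Ω S) := by
  rw [rearr_eq_of_subset hSsub]
  exact measurableSet_lt (by fun_prop)
    (((measurable_fiberWeight hS).comp measurable_fst).const_mul c)

lemma prodMk_preimage_rearr (hSsub : S ⊆ Ω ×ˢ univ) (y : EuclideanSpace ℝ (Fin m)) :
    Prod.mk y ⁻¹' rearr c Ω S = {z | exp (c * z) < c * fiberWeight c S y} := by
  rw [rearr_eq_of_subset hSsub]
  rfl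

end Rearrangement

theorem rearrangement_preserves_weighted_volume_general {m : ℕ} (c : ℝ) (hc : 0 < c)
    (Ω : Set (EuclideanSpace ℝ (Fin m)))
    (S : Set (EuclideanSpace ℝ (Fin m) × ℝ)) (hS : MeasurableSet S)
    (hSsub : S ⊆ Ω ×ˢ (univ : Set ℝ))
    (hvol : IntegrableOn (fun x => Real.exp (c * x.2)) S) :
    (∫ x in rearr c Ω S, Real.exp (c * x.2)) = (∫ x in S, Real.exp (c * x.2)) ∧
    ∀ g : EuclideanSpace ℝ (Fin m) → ℝ, Measurable g → (∃ K, ∀ y, |g y| ≤ K) →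
      (∫ x in rearr c Ω S, Real.exp (c * x.2) * g x.1)
        = (∫ x in S, Real.exp (c * x.2) * g x.1) := by
  rw [Measure.volume_eq_prod] at hvol ⊢
  have weighted :
      ∀ g : EuclideanSpace ℝ (Fin m) → ℝ, Measurable g → (∃ K, ∀ y, |g y| ≤ K) →
      ∫ x in rearr c Ω S, exp (c * x.2) * g x.1 ∂(volume.prod volume)
        = ∫ x in S, exp (c * x.2) * g x.1 ∂(volume.prod volume) := by
    rintro g hg ⟨K, hK⟩
    refine setIntegral_prod_mul_eq_of_fiber_integral_eq hS (measurableSet_rearr hS hSsub)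
      (by fun_prop) (fun _ => (exp_pos _).le) hvol (ae_of_all _ fun y => ?_)
      (ae_of_all _ fun y => ?_) hg hK
    · rw [prodMk_preimage_rearr hSsub]
      exact integrableOn_exp_mul_setOf_exp_mul_lt hc _
    · dsimp only
      rw [prodMk_preimage_rearr hSsub]
      exact integral_exp_mul_setOf_exp_mul_lt hc (fiberWeight_nonneg c S y)
  refine ⟨?_, weighted⟩
  simpa only [mul_one] using weighted (fun _ => 1) measurable_const ⟨1, fun _ => by norm_num⟩

/-- the exponential rearrangement preserves the weighted volume:
`∫_{S_ψ} e^{cz} dx = ∫_S e^{cz} dx`, and more generally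
`∫_{S_ψ} e^{cz} g(y) dx = ∫_S e^{cz} g(y) dx` for every bounded measurable `g`. -/
theorem rearrangement_preserves_weighted_volume {m : ℕ} (c : ℝ) (hc : 0 < c)
    (Ω : Set (EuclideanSpace ℝ (Fin m))) (hΩo : IsOpen Ω) (hΩb : Bornology.IsBounded Ω)
    (S : Set (EuclideanSpace ℝ (Fin m) × ℝ)) (hS : MeasurableSet S)
    (hSsub : S ⊆ Ω ×ˢ (univ : Set ℝ))
    (hvol : IntegrableOn (fun x => Real.exp (c * x.2)) S)
    (hpos : 0 < ∫ x in S, Real.exp (c * x.2)) :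
    (∫ x in rearr c Ω S, Real.exp (c * x.2)) = (∫ x in S, Real.exp (c * x.2)) ∧
    ∀ g : EuclideanSpace ℝ (Fin m) → ℝ, Measurable g → (∃ K, ∀ y, |g y| ≤ K) →
      (∫ x in rearr c Ω S, Real.exp (c * x.2) * g x.1)
        = (∫ x in S, Real.exp (c * x.2) * g x.1) :=
  rearrangement_preserves_weighted_volume_general c hc Ω S hS hSsub hvol
end
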